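/- arXiv:2602.15702 — 7 statements merged into one kernel-verified Lean document; each statement's English description precedes it below -/
import Mathlib

section
/- Let M' be a matroid on a finite ground set N' and let w : N' → ℕ be a weight function with 1 ≤ w(e) ≤ W for every e ∈ N'. Let N = {(e,i) : e ∈ N', 1 ≤ i ≤ w(e)} and let 𝓘 be the family of all subsets I ⊆ N such that for every i ∈ {1,…,W} the set {e ∈ N' : (e, w(e)-i+1) ∈ I} is independent in M'. Then 𝓘 satisfies the matroid independence axioms: (i) ∅ ∈ 𝓘; (ii) if A ⊆ B and B ∈ 𝓘 then A ∈ 𝓘; (iii) if A, B ∈ 𝓘 and |A| > |B| then there exists x ∈ A \ B with B ∪ {x} ∈ 𝓘. Hence 𝓘 is the family of independent sets of a matroid on N (the unfolded matroid M₂). -/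
open Finset

/-- A matroid on a finite ground set, given by its family of independent sets. -/
structure FinMatroid (α : Type*) [DecidableEq α] [Fintype α] where
  Indep : Finset α → Prop
  indep_empty : Indep ∅
  indep_subset : ∀ ⦃A B : Finset α⦄, A ⊆ B → Indep B → Indep A
  indep_exchange : ∀ ⦃A B : Finset α⦄, Indep A → Indep B → B.card < A.card →
    ∃ x ∈ A \ B, Indep (insert x B)

/-- The rank of a set `S` in a matroid: the size of a largest independent subset of `S`. -/
noncomputable def FinMatroid.rank {α : Type*} [DecidableEq α] [Fintype α]
    (M : FinMatroid α) (S : Finset α) : ℕ :=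
  sSup {n : ℕ | ∃ I ⊆ S, M.Indep I ∧ I.card = n}

/-- The rank of `S` with respect to an arbitrary independence predicate. -/
noncomputable def frank {β : Type*} (Ind : Finset β → Prop) (S : Finset β) : ℕ :=
  sSup {n : ℕ | ∃ I ⊆ S, Ind I ∧ I.card = n}

variable {α : Type*} [DecidableEq α] [Fintype α]

/-- The unfolded ground set `N = {(e,i) : e ∈ N', 1 ≤ i ≤ w e}`. -/
def unfoldGround (w : α → ℕ) : Finset (α × ℕ) :=
  Finset.univ.biUnion fun e => (Finset.Icc 1 (w e)).image fun i => (e, i)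

/-- The `i`-th layer projection `{e ∈ N' : (e,i) ∈ I}`. -/
def proj1 (I : Finset (α × ℕ)) (i : ℕ) : Finset α :=
  Finset.univ.filter fun e => (e, i) ∈ I

/-- The `i`-th reverse-layer projection `{e ∈ N' : (e, w e - i + 1) ∈ I}`. -/
def proj2 (w : α → ℕ) (I : Finset (α × ℕ)) (i : ℕ) : Finset α :=
  Finset.univ.filter fun e => i ≤ w e ∧ (e, w e - i + 1) ∈ I

/-- Independence in the unfolded matroid `M₁`. -/
def UnfoldIndep1 (M' : FinMatroid α) (w : α → ℕ) (W : ℕ) (I : Finset (α × ℕ)) : Prop :=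
  I ⊆ unfoldGround w ∧ ∀ i ∈ Finset.Icc 1 W, M'.Indep (proj1 I i)

/-- Independence in the unfolded matroid `M₂`. -/
def UnfoldIndep2 (M' : FinMatroid α) (w : α → ℕ) (W : ℕ) (I : Finset (α × ℕ)) : Prop :=
  I ⊆ unfoldGround w ∧ ∀ i ∈ Finset.Icc 1 W, M'.Indep (proj2 w I i)

/-- The unfolding `{(e,i) : e ∈ S', 1 ≤ i ≤ w e}` of a set `S' ⊆ N'`. -/
def unfoldSet (w : α → ℕ) (S' : Finset α) : Finset (α × ℕ) :=
  S'.biUnion fun e => (Finset.Icc 1 (w e)).image fun i => (e, i)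

/-
Each element `(e, k)` of the unfolded ground set lies in exactly one reverse layer, namely
`w e - k + 1`, and the reverse layer `i` of a set `I` is, via `(e, k) ↦ e`, a copy of
`proj2 w I i`. So `|I|` is the sum of the `|proj2 w I i|`, and if `|B| < |A|` some layer `i` has
`|proj2 w B i| < |proj2 w A i|`. Exchanging in `M'` within that layer (or freely, if the layer
is unconstrained, i.e. `i > W`) gives the element to add to `B`; it lies in layer `i` only, so
no other projection changes.
-/

def reverseLayer (w : α → ℕ) (p : α × ℕ) : ℕ :=
  w p.1 - p.2 + 1

lemma mem_unfoldGround {w : α → ℕ} {p : α × ℕ} :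
    p ∈ unfoldGround w ↔ 1 ≤ p.2 ∧ p.2 ≤ w p.1 := by
  obtain ⟨e, k⟩ := p
  simp [unfoldGround]

@[simp]
lemma mem_proj2 {w : α → ℕ} {I : Finset (α × ℕ)} {i : ℕ} {e : α} :
    e ∈ proj2 w I i ↔ i ≤ w e ∧ (e, w e - i + 1) ∈ I := by
  simp [proj2]

@[simp]
lemma proj2_empty (w : α → ℕ) (i : ℕ) : proj2 w (∅ : Finset (α × ℕ)) i = ∅ := by
  ext; simp

lemma proj2_mono {w : α → ℕ} {A B : Finset (α × ℕ)} (hAB : A ⊆ B) (i : ℕ) :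
    proj2 w A i ⊆ proj2 w B i := fun e he => by
  rw [mem_proj2] at he ⊢
  exact ⟨he.1, hAB he.2⟩

lemma proj2_insert_self {w : α → ℕ} {B : Finset (α × ℕ)} {i : ℕ} {e : α} (hi : i ≤ w e) :
    proj2 w (insert (e, w e - i + 1) B) i = insert e (proj2 w B i) := by
  ext f
  by_cases hfe : f = e
  · subst hfe; simp [hi]
  · simp [hfe]

lemma proj2_insert_of_ne {w : α → ℕ} {B : Finset (α × ℕ)} {i j : ℕ} {e : α} (hi : i ≤ w e)
    (hji : j ≠ i) : proj2 w (insert (e, w e - i + 1) B) j = proj2 w B j := by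
  ext f
  simp only [mem_proj2, mem_insert, Prod.mk.injEq]
  constructor
  · rintro ⟨hj, ⟨rfl, h⟩ | hf⟩
    · omega
    · exact ⟨hj, hf⟩
  · rintro ⟨hj, hf⟩
    exact ⟨hj, Or.inr hf⟩

lemma card_proj2 {w : α → ℕ} {I : Finset (α × ℕ)} (hI : I ⊆ unfoldGround w) (i : ℕ) :
    (proj2 w I i).card = (I.filter fun p => reverseLayer w p = i).card := by
  have layer_mem : ∀ p ∈ I.filter fun p => reverseLayer w p = i,
      p ∈ I ∧ i ≤ w p.1 ∧ p.2 = w p.1 - i + 1 := fun p hp => by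
    rw [Finset.mem_filter, reverseLayer] at hp
    have hk := mem_unfoldGround.mp (hI hp.1)
    exact ⟨hp.1, by omega, by omega⟩
  refine card_nbij' (fun e => (e, w e - i + 1)) Prod.fst (fun e he => ?_) (fun p hp => ?_)
    (fun _ _ => rfl) (fun p hp => ?_)
  · rw [Finset.mem_coe, mem_proj2] at he
    have hk := mem_unfoldGround.mp (hI he.2)
    rw [Finset.mem_coe, Finset.mem_filter, reverseLayer]
    exact ⟨he.2, by dsimp only at hk ⊢; omega⟩
  · obtain ⟨hpI, hi, hpi⟩ := layer_mem p hp
    rw [Finset.mem_coe, mem_proj2, ← hpi]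
    exact ⟨hi, hpI⟩
  · exact Prod.ext rfl (layer_mem p hp).2.2.symm

lemma exists_card_proj2_lt {w : α → ℕ} {A B : Finset (α × ℕ)} (hA : A ⊆ unfoldGround w)
    (hB : B ⊆ unfoldGround w) (hcard : B.card < A.card) :
    ∃ i, (proj2 w B i).card < (proj2 w A i).card := by
  have hmaps : ∀ S ⊆ A ∪ B, Set.MapsTo (reverseLayer w) S ((A ∪ B).image (reverseLayer w)) :=
    fun S hS p hp => mem_image_of_mem _ (hS hp)
  rw [card_eq_sum_card_fiberwise (hmaps A subset_union_left),
    card_eq_sum_card_fiberwise (hmaps B subset_union_right)] at hcard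
  obtain ⟨i, -, hi⟩ := exists_lt_of_sum_lt hcard
  exact ⟨i, by rwa [card_proj2 hA, card_proj2 hB]⟩

namespace UnfoldIndep2

variable {M' : FinMatroid α} {w : α → ℕ} {W : ℕ}

lemma empty : UnfoldIndep2 M' w W ∅ :=
  ⟨empty_subset _, fun i _ => by simpa using M'.indep_empty⟩

lemma subset {A B : Finset (α × ℕ)} (hAB : A ⊆ B) (hB : UnfoldIndep2 M' w W B) :
    UnfoldIndep2 M' w W A :=
  ⟨hAB.trans hB.1, fun i hi => M'.indep_subset (proj2_mono hAB i) (hB.2 i hi)⟩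

lemma insert_of_indep_proj2 {B : Finset (α × ℕ)} (hB : UnfoldIndep2 M' w W B) {i : ℕ} {e : α}
    (hi : i ≤ w e) (hx : (e, w e - i + 1) ∈ unfoldGround w)
    (hins : i ∈ Icc 1 W → M'.Indep (insert e (proj2 w B i))) :
    UnfoldIndep2 M' w W (insert (e, w e - i + 1) B) := by
  refine ⟨insert_subset hx hB.1, fun j hj => ?_⟩
  obtain rfl | hji := eq_or_ne j i
  · rw [proj2_insert_self hi]
    exact hins hj
  · rw [proj2_insert_of_ne hi hji]
    exact hB.2 j hj

lemma exchange {A B : Finset (α × ℕ)} (hA : UnfoldIndep2 M' w W A)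
    (hB : UnfoldIndep2 M' w W B) (hcard : B.card < A.card) :
    ∃ x ∈ A \ B, UnfoldIndep2 M' w W (insert x B) := by
  obtain ⟨i, hi⟩ := exists_card_proj2_lt hA.1 hB.1 hcard
  obtain ⟨e, he, hins⟩ : ∃ e ∈ proj2 w A i \ proj2 w B i,
      i ∈ Icc 1 W → M'.Indep (insert e (proj2 w B i)) := by
    by_cases hiW : i ∈ Icc 1 W
    · obtain ⟨e, he, hins⟩ := M'.indep_exchange (hA.2 i hiW) (hB.2 i hiW) hi
      exact ⟨e, he, fun _ => hins⟩
    · obtain ⟨e, heA, heB⟩ := exists_mem_notMem_of_card_lt_card hi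
      exact ⟨e, mem_sdiff.mpr ⟨heA, heB⟩, fun h => absurd h hiW⟩
  simp only [mem_sdiff, mem_proj2, not_and] at he
  exact ⟨_, mem_sdiff.mpr ⟨he.1.2, he.2 he.1.1⟩,
    hB.insert_of_indep_proj2 he.1.1 (hA.1 he.1.2) hins⟩

end UnfoldIndep2

theorem unfolded_matroid_two_axioms_general (M' : FinMatroid α) (w : α → ℕ) (W : ℕ) :
    UnfoldIndep2 M' w W ∅ ∧
    (∀ A B : Finset (α × ℕ), A ⊆ B → UnfoldIndep2 M' w W B → UnfoldIndep2 M' w W A) ∧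
    (∀ A B : Finset (α × ℕ), UnfoldIndep2 M' w W A → UnfoldIndep2 M' w W B →
      B.card < A.card → ∃ x ∈ A \ B, UnfoldIndep2 M' w W (insert x B)) :=
  ⟨UnfoldIndep2.empty, fun _ _ => UnfoldIndep2.subset, fun _ _ => UnfoldIndep2.exchange⟩

/-- the family `UnfoldIndep2 M' w W` satisfies the matroid
independence axioms, so it is the family of independent sets of a matroid on
the unfolded ground set (the unfolded matroid `M₂`). -/
theorem unfolded_matroid_two_axioms (M' : FinMatroid α) (w : α → ℕ) (W : ℕ)
    (hw : ∀ e : α, 1 ≤ w e ∧ w e ≤ W) :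
    UnfoldIndep2 M' w W ∅ ∧
    (∀ A B : Finset (α × ℕ), A ⊆ B → UnfoldIndep2 M' w W B → UnfoldIndep2 M' w W A) ∧
    (∀ A B : Finset (α × ℕ), UnfoldIndep2 M' w W A → UnfoldIndep2 M' w W B →
      B.card < A.card → ∃ x ∈ A \ B, UnfoldIndep2 M' w W (insert x B)) :=
  unfolded_matroid_two_axioms_general M' w W
end

section
/- Let M'₁, M'₂ be matroids on a common finite ground set N' with w : N' → ℕ, 1 ≤ w(e) ≤ W, and let M₁, M₂ be their unfolded matroids on N. For every set S' ⊆ N' that is independent in both M'₁ and M'₂, the set S = {(e,i) : e ∈ S', 1 ≤ i ≤ w(e)} is independent in both M₁ and M₂ and has cardinality |S| = ∑_{e∈S'} w(e). Consequently, the maximum cardinality of a common independent set of M₁, M₂ is at least the maximum of ∑_{e∈S'} w(e) over all common independent sets S' of M'₁, M'₂. -/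
open Finset

variable {α : Type*} [DecidableEq α] [Fintype α]

/-
Every layer `{e : (e, i) ∈ S}` of the unfolding `S` of `S'`, and every reversed layer, is a subset
of `S'`, so both unfolded independence conditions follow from `S'` being independent by the subset
axiom. The fibre of `S` over `e` is a copy of `Icc 1 (w e)`, so `|S| = ∑_{e ∈ S'} w e`, and every
weight attained by a common independent set of `M'₁, M'₂` is a cardinality attained by one of
`M₁, M₂`.
-/

omit [Fintype α] in
lemma mem_unfoldSet {w : α → ℕ} {S' : Finset α} {e : α} {i : ℕ} :
    (e, i) ∈ unfoldSet w S' ↔ e ∈ S' ∧ 1 ≤ i ∧ i ≤ w e := by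
  simp [unfoldSet, Prod.ext_iff, and_assoc]

omit [Fintype α] in
lemma card_unfoldSet (w : α → ℕ) (S' : Finset α) :
    (unfoldSet w S').card = ∑ e ∈ S', w e := by
  rw [unfoldSet, card_biUnion]
  · refine sum_congr rfl fun e _ => ?_
    rw [card_image_of_injective _ (Prod.mk_right_injective e), Nat.card_Icc, Nat.add_sub_cancel]
  · intro a _ b _ hab
    simp only [disjoint_left, mem_image]
    rintro _ ⟨i, _, rfl⟩ ⟨j, _, h⟩
    exact hab (Prod.ext_iff.mp h).1.symm

lemma unfoldSet_subset_unfoldGround (w : α → ℕ) (S' : Finset α) :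
    unfoldSet w S' ⊆ unfoldGround w :=
  biUnion_subset_biUnion_of_subset_left _ (subset_univ S')

lemma proj1_unfoldSet_subset (w : α → ℕ) (S' : Finset α) (i : ℕ) :
    proj1 (unfoldSet w S') i ⊆ S' := fun _ he =>
  (mem_unfoldSet.mp (mem_filter.mp he).2).1

lemma proj2_unfoldSet_subset (w : α → ℕ) (S' : Finset α) (i : ℕ) :
    proj2 w (unfoldSet w S') i ⊆ S' := fun _ he =>
  (mem_unfoldSet.mp (mem_filter.mp he).2.2).1

lemma unfoldIndep1_unfoldSet {M' : FinMatroid α} {S' : Finset α} (hS' : M'.Indep S')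
    (w : α → ℕ) (W : ℕ) : UnfoldIndep1 M' w W (unfoldSet w S') :=
  ⟨unfoldSet_subset_unfoldGround w S', fun i _ =>
    M'.indep_subset (proj1_unfoldSet_subset w S' i) hS'⟩

lemma unfoldIndep2_unfoldSet {M' : FinMatroid α} {S' : Finset α} (hS' : M'.Indep S')
    (w : α → ℕ) (W : ℕ) : UnfoldIndep2 M' w W (unfoldSet w S') :=
  ⟨unfoldSet_subset_unfoldGround w S', fun i _ =>
    M'.indep_subset (proj2_unfoldSet_subset w S' i) hS'⟩

lemma bddAbove_card_unfoldIndep1 (M' : FinMatroid α) (w : α → ℕ) (W : ℕ)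
    (P : Finset (α × ℕ) → Prop) :
    BddAbove {n : ℕ | ∃ I, UnfoldIndep1 M' w W I ∧ P I ∧ I.card = n} := by
  refine ⟨(unfoldGround w).card, ?_⟩
  rintro _ ⟨I, hI, _, rfl⟩
  exact card_le_card hI.1

theorem unfold_common_indep_general (M'₁ M'₂ : FinMatroid α) (w : α → ℕ) (W : ℕ) :
    (∀ S' : Finset α, M'₁.Indep S' → M'₂.Indep S' →
      UnfoldIndep1 M'₁ w W (unfoldSet w S') ∧
      UnfoldIndep2 M'₂ w W (unfoldSet w S') ∧
      (unfoldSet w S').card = ∑ e ∈ S', w e) ∧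
    sSup {n : ℕ | ∃ S' : Finset α, M'₁.Indep S' ∧ M'₂.Indep S' ∧ ∑ e ∈ S', w e = n} ≤
      sSup {n : ℕ | ∃ I : Finset (α × ℕ),
        UnfoldIndep1 M'₁ w W I ∧ UnfoldIndep2 M'₂ w W I ∧ I.card = n} := by
  have unfold_common : ∀ S' : Finset α, M'₁.Indep S' → M'₂.Indep S' →
      UnfoldIndep1 M'₁ w W (unfoldSet w S') ∧ UnfoldIndep2 M'₂ w W (unfoldSet w S') ∧
        (unfoldSet w S').card = ∑ e ∈ S', w e := fun S' h₁ h₂ =>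
    ⟨unfoldIndep1_unfoldSet h₁ w W, unfoldIndep2_unfoldSet h₂ w W, card_unfoldSet w S'⟩
  refine ⟨unfold_common, csSup_le_csSup (bddAbove_card_unfoldIndep1 M'₁ w W _)
    ⟨0, ∅, M'₁.indep_empty, M'₂.indep_empty, sum_empty⟩ ?_⟩
  rintro _ ⟨S', h₁, h₂, rfl⟩
  exact ⟨unfoldSet w S', unfold_common S' h₁ h₂⟩

/-- for every common independent set `S'` of `M'₁, M'₂`, its
unfolding is a common independent set of the unfolded matroids `M₁, M₂` of
cardinality `∑_{e ∈ S'} w e`; consequently the maximum cardinality of a common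
independent set of `M₁, M₂` is at least the maximum weight of a common
independent set of `M'₁, M'₂`. -/
theorem unfold_common_indep (M'₁ M'₂ : FinMatroid α) (w : α → ℕ) (W : ℕ)
    (hw : ∀ e : α, 1 ≤ w e ∧ w e ≤ W) :
    (∀ S' : Finset α, M'₁.Indep S' → M'₂.Indep S' →
      UnfoldIndep1 M'₁ w W (unfoldSet w S') ∧
      UnfoldIndep2 M'₂ w W (unfoldSet w S') ∧
      (unfoldSet w S').card = ∑ e ∈ S', w e) ∧
    sSup {n : ℕ | ∃ S' : Finset α, M'₁.Indep S' ∧ M'₂.Indep S' ∧ ∑ e ∈ S', w e = n} ≤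
      sSup {n : ℕ | ∃ I : Finset (α × ℕ),
        UnfoldIndep1 M'₁ w W I ∧ UnfoldIndep2 M'₂ w W I ∧ I.card = n} :=
  unfold_common_indep_general M'₁ M'₂ w W
end

section
/- Let M be a matroid on a finite ground set, let I and S be independent sets of M, and let e_1, …, e_l be distinct elements of S \ I such that for every t ∈ {1,…,l} the set I ∪ {e_t} is dependent. For each t let C_t be the unique circuit of M contained in I ∪ {e_t} (the fundamental circuit of e_t with respect to I). Then |(⋃_{t=1}^{l} C_t) ∩ (I \ S)| ≥ l. -/
open Finset

variable {α : Type*} [DecidableEq α] [Fintype α]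

/-- A circuit of a matroid: a minimal dependent set. -/
def IsCircuit (M : FinMatroid α) (C : Finset α) : Prop :=
  ¬ M.Indep C ∧ ∀ D ⊂ C, M.Indep D

/-- Augmentation: an independent set can be grown inside the union with a larger
independent set to match its cardinality. -/
lemma finmatroid_aug (M : FinMatroid α) :
    ∀ (k : ℕ) (A B : Finset α), M.Indep A → M.Indep B → B.card + k = A.card →
      ∃ B', B ⊆ B' ∧ B' ⊆ B ∪ A ∧ M.Indep B' ∧ B'.card = A.card := by
  intro k
  induction k with
  | zero =>
    intro A B hA hB h
    exact ⟨B, subset_rfl, subset_union_left, hB, by omega⟩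
  | succ k ih =>
    intro A B hA hB h
    obtain ⟨x, hx, hxI⟩ := M.indep_exchange hA hB (by omega)
    have hxA := (mem_sdiff.mp hx).1
    have hxB := (mem_sdiff.mp hx).2
    obtain ⟨B', h1, h2, h3, h4⟩ := ih A (insert x B) hA hxI
      (by rw [card_insert_of_notMem hxB]; omega)
    refine ⟨B', (subset_insert _ _).trans h1, h2.trans ?_, h3, h4⟩
    intro y hy
    simp only [mem_union, mem_insert] at hy ⊢
    rcases hy with (h | h) | h
    · exact Or.inr (h ▸ hxA)
    · exact Or.inl h
    · exact Or.inr h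

/-- if `e 1, …, e l` are distinct elements of `S \ I` spanned by
the independent set `I`, and `C t` is the fundamental circuit of `e t` with
respect to `I`, then `|(⋃ t, C t) ∩ (I \ S)| ≥ l`. -/
theorem circuit_charging (M : FinMatroid α) (I S : Finset α)
    (hI : M.Indep I) (hS : M.Indep S) (l : ℕ) (e : Fin l → α)
    (he_inj : Function.Injective e)
    (he_mem : ∀ t, e t ∈ S \ I)
    (he_dep : ∀ t, ¬ M.Indep (insert (e t) I))
    (C : Fin l → Finset α)
    (hC_circ : ∀ t, IsCircuit M (C t))
    (hC_sub : ∀ t, C t ⊆ insert (e t) I) :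
    l ≤ ((Finset.univ.biUnion C) ∩ (I \ S)).card := by
  classical
  set X := (Finset.univ.biUnion C) ∩ (I \ S) with hXdef
  set A0 := X ∪ (I ∩ S) with hA0def
  have hA0I : A0 ⊆ I := by
    intro y hy
    rcases mem_union.mp hy with h | h
    · exact (mem_sdiff.mp (mem_inter.mp h).2).1
    · exact (mem_inter.mp h).1
  -- e t ∈ C t
  have heC : ∀ t, e t ∈ C t := by
    intro t
    by_contra h
    have hsub : C t ⊆ I := by
      intro y hy
      rcases mem_insert.mp (hC_sub t hy) with h1 | h1
      · exact absurd (h1 ▸ hy) h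
      · exact h1
    exact (hC_circ t).1 (M.indep_subset hsub hI)
  have hCsub : ∀ t, C t \ {e t} ⊆ A0 := by
    intro t y hy
    simp only [mem_sdiff, mem_singleton] at hy
    obtain ⟨hyC, hyne⟩ := hy
    have hyI : y ∈ I := by
      rcases mem_insert.mp (hC_sub t hyC) with h | h
      · exact absurd h hyne
      · exact h
    by_cases hyS : y ∈ S
    · exact mem_union_right _ (mem_inter.mpr ⟨hyI, hyS⟩)
    · exact mem_union_left _
        (mem_inter.mpr ⟨mem_biUnion.mpr ⟨t, mem_univ _, hyC⟩, mem_sdiff.mpr ⟨hyI, hyS⟩⟩)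
  -- a maximum independent subset K of A0
  obtain ⟨K, hKmem, hKmax⟩ := Finset.exists_max_image (A0.powerset.filter M.Indep)
    Finset.card ⟨∅, by simp [M.indep_empty]⟩
  have hKA0 : K ⊆ A0 := mem_powerset.mp (mem_filter.mp hKmem).1
  have hKind : M.Indep K := (mem_filter.mp hKmem).2
  have hKmax' : ∀ J ⊆ A0, M.Indep J → J.card ≤ K.card := fun J hJ hJi =>
    hKmax J (mem_filter.mpr ⟨mem_powerset.mpr hJ, hJi⟩)
  -- K spans every e t
  have heKdep : ∀ t, ¬ M.Indep (insert (e t) K) := by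
    intro t hdep
    have hetI : e t ∉ I := (mem_sdiff.mp (he_mem t)).2
    have hetK : e t ∉ K := fun h => hetI (hA0I (hKA0 h))
    have hBind : M.Indep (C t \ {e t}) :=
      (hC_circ t).2 _ (ssubset_iff_of_subset (sdiff_subset)
        |>.mpr ⟨e t, heC t, by simp⟩)
    have hBcard : (C t \ {e t}).card ≤ K.card := hKmax' _ (hCsub t) hBind
    have hcard : (insert (e t) K).card = K.card + 1 := card_insert_of_notMem hetK
    obtain ⟨B', h1, h2, h3, h4⟩ := finmatroid_aug M
      ((insert (e t) K).card - (C t \ {e t}).card) (insert (e t) K) (C t \ {e t})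
      hdep hBind (by omega)
    by_cases hmem : e t ∈ B'
    · have : C t ⊆ B' := by
        intro y hy
        by_cases hye : y = e t
        · exact hye ▸ hmem
        · exact h1 (mem_sdiff.mpr ⟨hy, by simpa using hye⟩)
      exact (hC_circ t).1 (M.indep_subset this h3)
    · have hB'A0 : B' ⊆ A0 := by
        intro y hy
        rcases mem_union.mp (h2 hy) with h | h
        · exact hCsub t h
        · rcases mem_insert.mp h with h | h
          · exact absurd (h ▸ hy) hmem
          · exact hKA0 h
      have := hKmax' B' hB'A0 h3
      omega
  -- the competing independent set
  set B := (Finset.univ.image e) ∪ (I ∩ S) with hBdef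
  have hBS : B ⊆ S := by
    intro y hy
    rcases mem_union.mp hy with h | h
    · obtain ⟨t, _, rfl⟩ := mem_image.mp h
      exact (mem_sdiff.mp (he_mem t)).1
    · exact (mem_inter.mp h).2
  have hBind : M.Indep B := M.indep_subset hBS hS
  have hBcard : B.card = l + (I ∩ S).card := by
    rw [card_union_of_disjoint, Finset.card_image_of_injective _ he_inj, card_univ,
      Fintype.card_fin]
    rw [disjoint_left]
    intro y hy hy2
    obtain ⟨t, _, rfl⟩ := mem_image.mp hy
    exact (mem_sdiff.mp (he_mem t)).2 (mem_inter.mp hy2).1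
  -- |B| ≤ |K|
  have hBK : B.card ≤ K.card := by
    by_contra h
    push_neg at h
    obtain ⟨x, hx, hxI⟩ := M.indep_exchange hBind hKind h
    have hxB := (mem_sdiff.mp hx).1
    have hxK := (mem_sdiff.mp hx).2
    rcases mem_union.mp hxB with hxe | hxIS
    · obtain ⟨t, _, rfl⟩ := mem_image.mp hxe
      exact heKdep t hxI
    · have hxA0 : x ∈ A0 := mem_union_right _ hxIS
      have := hKmax' (insert x K) (insert_subset hxA0 hKA0) hxI
      rw [card_insert_of_notMem hxK] at this
      omega
  have hA0card : A0.card = X.card + (I ∩ S).card := by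
    rw [hA0def, card_union_of_disjoint]
    rw [disjoint_left]
    intro y hy hy2
    exact (mem_sdiff.mp (mem_inter.mp hy).2).2 (mem_inter.mp hy2).2
  have hKcard : K.card ≤ A0.card := card_le_card hKA0
  omega
end

section
/- Let 0 < ε < 1/2. Let M'₁, M'₂ be matroids on a common finite ground set N' with weight function w : N' → ℝ, w(e) > 0 for all e. Suppose there are pairwise disjoint weight intervals [l_1,r_1], …, [l_k,r_k] with 0 < l_j ≤ r_j and l_{j+1} > r_j/ε for all j, such that the sets N'_j = {e ∈ N' : l_j ≤ w(e) ≤ r_j} partition N'. For each j ∈ {1,…,k} let I'_j ⊆ N'_j be a set independent in both M'₁ and M'₂. Then there exists a set I ⊆ ⋃_{j=1}^k I'_j that is independent in both M'₁ and M'₂ and satisfies ∑_{e∈I} w(e) ≥ (1 − 4ε) · ∑_{j=1}^{k} ∑_{e∈I'_j} w(e). -/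
open Finset

variable {α : Type*} [DecidableEq α] [Fintype α]

/-!
Process the weight classes from the heaviest to the lightest, keeping a common independent
set `S`. Matroid augmentation in each of the two matroids adds to `S` all but at most `2 |S|`
elements of the current class `I'ⱼ`, so class `j` loses weight at most `2 rⱼ |S|`, and `|S|` is
at most the number of elements of the heavier classes. Charging this loss to those elements,
an element of class `j'` is charged `2 ∑_{j < j'} rⱼ ≤ 4 ε l_{j'}`, since the spread condition
makes the `rⱼ` grow geometrically with ratio at least `1/ε ≥ 2`.
-/

namespace FinMatroid

theorem exists_subset_disjoint_indep_union {M : FinMatroid α} {S J : Finset α}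
    (hS : M.Indep S) (hJ : M.Indep J) :
    ∃ J' ⊆ J, Disjoint S J' ∧ M.Indep (S ∪ J') ∧ #J ≤ #J' + #S := by
  classical
  obtain ⟨T, hT, hTmax⟩ := ((S ∪ J).powerset.filter fun T => S ⊆ T ∧ M.Indep T).exists_max_image
    card ⟨S, mem_filter.mpr ⟨mem_powerset.mpr subset_union_left, Subset.rfl, hS⟩⟩
  simp only [mem_filter, mem_powerset] at hT
  obtain ⟨hTSJ, hST, hT⟩ := hT
  have hJT : #J ≤ #T := by
    by_contra! hlt
    obtain ⟨x, hx, hxT⟩ := M.indep_exchange hJ hT hlt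
    rw [mem_sdiff] at hx
    have := hTmax (insert x T) <| mem_filter.mpr
      ⟨mem_powerset.mpr (insert_subset (mem_union_right _ hx.1) hTSJ),
        hST.trans (subset_insert _ _), hxT⟩
    rw [card_insert_of_notMem hx.2] at this
    omega
  exact ⟨T \ S, sdiff_le_iff.mpr hTSJ, disjoint_sdiff, by rwa [union_sdiff_of_subset hST],
    by rwa [card_sdiff_add_card_eq_card hST]⟩

theorem exists_subset_disjoint_commonIndep_union {M₁ M₂ : FinMatroid α} {S J : Finset α}
    (hS₁ : M₁.Indep S) (hS₂ : M₂.Indep S) (hJ₁ : M₁.Indep J) (hJ₂ : M₂.Indep J) :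
    ∃ J' ⊆ J, Disjoint S J' ∧ M₁.Indep (S ∪ J') ∧ M₂.Indep (S ∪ J') ∧
      #J ≤ #J' + 2 * #S := by
  obtain ⟨J₁, hJ₁J, -, hSJ₁, hcard₁⟩ := exists_subset_disjoint_indep_union hS₁ hJ₁
  obtain ⟨J₂, hJ₂J₁, hdisj, hSJ₂, hcard₂⟩ :=
    exists_subset_disjoint_indep_union hS₂ (M₂.indep_subset hJ₁J hJ₂)
  exact ⟨J₂, hJ₂J₁.trans hJ₁J, hdisj,
    M₁.indep_subset (union_subset_union_right hJ₂J₁) hSJ₁, hSJ₂, by omega⟩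

theorem exists_subset_disjoint_commonIndep_union_sum_le {M₁ M₂ : FinMatroid α}
    {S J : Finset α} {w : α → ℝ} {c : ℝ} (hc : 0 ≤ c) (hJc : ∀ e ∈ J, w e ≤ c)
    (hS₁ : M₁.Indep S) (hS₂ : M₂.Indep S) (hJ₁ : M₁.Indep J) (hJ₂ : M₂.Indep J) :
    ∃ J' ⊆ J, Disjoint S J' ∧ M₁.Indep (S ∪ J') ∧ M₂.Indep (S ∪ J') ∧
      ∑ e ∈ J, w e - 2 * c * #S ≤ ∑ e ∈ J', w e := by
  obtain ⟨J', hJ'J, hdisj, hSJ₁, hSJ₂, hcard⟩ :=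
    exists_subset_disjoint_commonIndep_union hS₁ hS₂ hJ₁ hJ₂
  refine ⟨J', hJ'J, hdisj, hSJ₁, hSJ₂, ?_⟩
  have hcard' : (#(J \ J') : ℝ) ≤ 2 * #S := by
    have := card_sdiff_add_card_eq_card hJ'J
    exact_mod_cast (by omega : #(J \ J') ≤ 2 * #S)
  have hlost : ∑ e ∈ J \ J', w e ≤ #(J \ J') * c := by
    simpa using sum_le_card_nsmul _ w c fun e he => hJc e (mem_sdiff.mp he).1
  rw [← sum_sdiff hJ'J]
  linarith [mul_le_mul_of_nonneg_right hcard' hc]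

/-- Greedy merging of the sets `I j`, `j ∈ s`, in decreasing order of the index `j`:
the set `I j` loses weight at most `2 c j` times the number of elements merged before it. -/
theorem exists_commonIndep_subset_biUnion_sum_le {M₁ M₂ : FinMatroid α} {w : α → ℝ}
    {I : ℕ → Finset α} {c : ℕ → ℝ} (s : Finset ℕ) (hc : ∀ j ∈ s, 0 ≤ c j)
    (hIc : ∀ j ∈ s, ∀ e ∈ I j, w e ≤ c j)
    (hI : ∀ j ∈ s, M₁.Indep (I j) ∧ M₂.Indep (I j)) :
    ∃ S ⊆ s.biUnion I, M₁.Indep S ∧ M₂.Indep S ∧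
      ∑ j ∈ s, (∑ e ∈ I j, w e - 2 * c j * ∑ j' ∈ s with j < j', (#(I j') : ℝ)) ≤
        ∑ e ∈ S, w e := by
  induction s using Finset.induction_on_min with
  | empty => exact ⟨∅, empty_subset _, M₁.indep_empty, M₂.indep_empty, by simp⟩
  | insert a s has ih =>
    simp only [mem_insert, forall_eq_or_imp] at hc hIc hI
    obtain ⟨S, hSs, hS₁, hS₂, hSw⟩ := ih hc.2 hIc.2 hI.2
    obtain ⟨J, hJa, hdisj, hSJ₁, hSJ₂, hJw⟩ :=
      exists_subset_disjoint_commonIndep_union_sum_le hc.1 hIc.1 hS₁ hS₂ hI.1.1 hI.1.2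
    refine ⟨S ∪ J, union_subset ?_ (hJa.trans (subset_biUnion_of_mem I (mem_insert_self a s))),
      hSJ₁, hSJ₂, ?_⟩
    · exact hSs.trans (biUnion_subset_biUnion_of_subset_left _ (subset_insert _ _))
    have hnotmem : a ∉ s := fun ha => lt_irrefl a (has a ha)
    have hfilter_a : (insert a s).filter (a < ·) = s := by
      rw [filter_insert, if_neg (lt_irrefl a), filter_true_of_mem has]
    have hfilter : ∀ j ∈ s, (insert a s).filter (j < ·) = s.filter (j < ·) := fun j hj => by
      rw [filter_insert, if_neg (has j hj).not_gt]
    have hrest :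
        ∑ j ∈ s, (∑ e ∈ I j, w e - 2 * c j * ∑ j' ∈ insert a s with j < j', (#(I j') : ℝ)) =
          ∑ j ∈ s, (∑ e ∈ I j, w e - 2 * c j * ∑ j' ∈ s with j < j', (#(I j') : ℝ)) :=
      sum_congr rfl fun j hj => by rw [hfilter j hj]
    have hScard : (#S : ℝ) ≤ ∑ j ∈ s, (#(I j) : ℝ) := by
      exact_mod_cast (card_le_card hSs).trans card_biUnion_le
    rw [sum_insert hnotmem, hfilter_a, hrest, sum_union hdisj]
    linarith [mul_le_mul_of_nonneg_left hScard (mul_nonneg zero_le_two hc.1)]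

end FinMatroid

theorem sum_range_le_two_mul_of_le_mul_succ {ε : ℝ} {l r : ℕ → ℝ} {n : ℕ} (hε : 0 ≤ ε)
    (hε' : 2 * ε ≤ 1) (hl : ∀ j ≤ n, 0 ≤ l j) (hlr : ∀ j < n, l j ≤ r j)
    (hgap : ∀ j < n, r j ≤ ε * l (j + 1)) :
    ∑ j ∈ range n, r j ≤ 2 * ε * l n := by
  induction n with
  | zero => simpa using mul_nonneg (mul_nonneg zero_le_two hε) (hl 0 le_rfl)
  | succ n ih =>
    have hsum := ih (fun j hj => hl j (by omega)) (fun j hj => hlr j (by omega))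
      (fun j hj => hgap j (by omega))
    have hlrn := hlr n (by omega)
    have hrn : 0 ≤ r n := (hl n (by omega)).trans hlrn
    rw [sum_range_succ]
    linarith [hgap n (by omega), mul_le_mul_of_nonneg_left hlrn hε,
      mul_nonneg (sub_nonneg.mpr hε') hrn]

theorem sum_mul_sum_card_filter_lt_le {β : Type*} {ε : ℝ} {l r : ℕ → ℝ} {k : ℕ}
    {w : β → ℝ} {I : ℕ → Finset β} (hε : 0 ≤ ε) (hε' : 2 * ε ≤ 1) (hl : ∀ j < k, 0 ≤ l j)
    (hlr : ∀ j < k, l j ≤ r j) (hgap : ∀ j, j + 1 < k → r j ≤ ε * l (j + 1))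
    (hIl : ∀ j < k, ∀ e ∈ I j, l j ≤ w e) :
    ∑ j ∈ range k, 2 * r j * ∑ j' ∈ range k with j < j', (#(I j') : ℝ) ≤
      4 * ε * ∑ j ∈ range k, ∑ e ∈ I j, w e := by
  calc ∑ j ∈ range k, 2 * r j * ∑ j' ∈ range k with j < j', (#(I j') : ℝ)
      = ∑ j' ∈ range k, ∑ j ∈ range j', 2 * r j * #(I j') := by
        simp_rw [mul_sum]
        refine sum_comm' fun j j' => ?_
        simp only [mem_range, mem_filter]
        omega
    _ = ∑ j' ∈ range k, 2 * (∑ j ∈ range j', r j) * #(I j') := by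
        simp_rw [mul_sum, sum_mul]
    _ ≤ ∑ j' ∈ range k, 2 * (2 * ε * l j') * #(I j') := by
        refine sum_le_sum fun j' hj' => ?_
        rw [mem_range] at hj'
        gcongr
        exact sum_range_le_two_mul_of_le_mul_succ hε hε' (fun j hj => hl j (by omega))
          (fun j hj => hlr j (by omega)) fun j hj => hgap j (by omega)
    _ ≤ ∑ j' ∈ range k, 4 * ε * ∑ e ∈ I j', w e := by
        refine sum_le_sum fun j' hj' => ?_
        have := card_nsmul_le_sum (I j') w (l j') (hIl j' (mem_range.mp hj'))
        rw [nsmul_eq_mul] at this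
        linarith [mul_le_mul_of_nonneg_left this (by positivity : (0 : ℝ) ≤ 4 * ε)]
    _ = 4 * ε * ∑ j ∈ range k, ∑ e ∈ I j, w e := (mul_sum _ _ _).symm

theorem spread_greedy_merge_general (ε : ℝ) (hε0 : 0 < ε) (hε : ε < 1/2)
    (M'₁ M'₂ : FinMatroid α) (w : α → ℝ)
    (k : ℕ) (l r : ℕ → ℝ)
    (hlr : ∀ j < k, 0 < l j ∧ l j ≤ r j)
    (hgap : ∀ j, j + 1 < k → r j / ε < l (j + 1))
    (I' : ℕ → Finset α)
    (hI'sub : ∀ j < k, ∀ e ∈ I' j, l j ≤ w e ∧ w e ≤ r j)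
    (hI'ind : ∀ j < k, M'₁.Indep (I' j) ∧ M'₂.Indep (I' j)) :
    ∃ I ⊆ (Finset.range k).biUnion I', M'₁.Indep I ∧ M'₂.Indep I ∧
      (1 - 4 * ε) * ∑ j ∈ Finset.range k, ∑ e ∈ I' j, w e ≤ ∑ e ∈ I, w e := by
  obtain ⟨S, hS, hS₁, hS₂, hSw⟩ := FinMatroid.exists_commonIndep_subset_biUnion_sum_le
    (M₁ := M'₁) (M₂ := M'₂) (w := w) (I := I') (c := r) (range k)
    (fun j hj => (hlr j (mem_range.mp hj)).1.le.trans (hlr j (mem_range.mp hj)).2)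
    (fun j hj e he => (hI'sub j (mem_range.mp hj) e he).2)
    (fun j hj => hI'ind j (mem_range.mp hj))
  have hloss := sum_mul_sum_card_filter_lt_le (w := w) (I := I') hε0.le (by linarith)
    (fun j hj => (hlr j hj).1.le) (fun j hj => (hlr j hj).2)
    (fun j hj => ((div_lt_iff₀' hε0).mp (hgap j hj)).le) fun j hj e he => (hI'sub j hj e he).1
  refine ⟨S, hS, hS₁, hS₂, ?_⟩
  rw [sum_sub_distrib] at hSw
  linarith

/-- greedily merging common independent sets of the weight classes
of an `ε⁻¹`-spread instance loses at most a `(1 - 4ε)` factor of the total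
weight. -/
theorem spread_greedy_merge (ε : ℝ) (hε0 : 0 < ε) (hε : ε < 1/2)
    (M'₁ M'₂ : FinMatroid α) (w : α → ℝ) (hw : ∀ e : α, 0 < w e)
    (k : ℕ) (l r : ℕ → ℝ)
    (hlr : ∀ j < k, 0 < l j ∧ l j ≤ r j)
    (hgap : ∀ j, j + 1 < k → r j / ε < l (j + 1))
    (hpart : ∀ e : α, ∃ j < k, l j ≤ w e ∧ w e ≤ r j)
    (I' : ℕ → Finset α)
    (hI'sub : ∀ j < k, ∀ e ∈ I' j, l j ≤ w e ∧ w e ≤ r j)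
    (hI'ind : ∀ j < k, M'₁.Indep (I' j) ∧ M'₂.Indep (I' j)) :
    ∃ I ⊆ (Finset.range k).biUnion I', M'₁.Indep I ∧ M'₂.Indep I ∧
      (1 - 4 * ε) * ∑ j ∈ Finset.range k, ∑ e ∈ I' j, w e ≤ ∑ e ∈ I, w e :=
  spread_greedy_merge_general ε hε0 hε M'₁ M'₂ w k l r hlr hgap I' hI'sub hI'ind
end

section
/- Let 0 < ε < 1/2 and α ∈ [0,1]. Let M'₁, M'₂ be matroids on a common finite ground set N' with weight function w : N' → ℝ, w(e) > 0 for all e, that are ε⁻¹-spread with weight classes N'_1, …, N'_k. For each j ∈ {1,…,k} let I'_j ⊆ N'_j be a set independent in both M'₁ and M'₂ such that ∑_{e∈I'_j} w(e) ≥ α · max{∑_{e∈T} w(e) : T ⊆ N'_j, T independent in both M'₁ and M'₂}. Then there exists a set I ⊆ ⋃_{j=1}^k I'_j that is independent in both M'₁ and M'₂ and satisfies ∑_{e∈I} w(e) ≥ α (1 − 4ε) · w(I*), where I* is a maximum weight common independent set of M'₁, M'₂. -/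
open Finset

variable {α : Type*} [DecidableEq α] [Fintype α]

namespace FinMatroid

theorem exists_subset_indep_union_card_le (M : FinMatroid α) {A B : Finset α}
    (hA : M.Indep A) (hB : M.Indep B) :
    ∃ S ⊆ B, M.Indep (A ∪ S) ∧ B.card ≤ S.card + A.card := by
  classical
  obtain ⟨S, hS, hmax⟩ := (B.powerset.filter fun S => M.Indep (A ∪ S)).exists_max_image
    (fun S => (A ∪ S).card) ⟨∅, by simpa using hA⟩
  rw [mem_filter, mem_powerset] at hS
  have hBS : B.card ≤ (A ∪ S).card := by
    by_contra! hlt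
    obtain ⟨x, hx, hxS⟩ := M.indep_exchange hB hS.2 hlt
    rw [mem_sdiff] at hx
    have hle := hmax (insert x S)
      (mem_filter.2 ⟨mem_powerset.2 (insert_subset hx.1 hS.1), by rwa [union_insert]⟩)
    rw [union_insert, card_insert_of_notMem hx.2] at hle
    omega
  exact ⟨S, hS.1, hS.2, hBS.trans ((card_union_le A S).trans_eq (add_comm _ _))⟩

theorem exists_subset_commonIndep_union_card_le (M₁ M₂ : FinMatroid α) {A B : Finset α}
    (hA₁ : M₁.Indep A) (hA₂ : M₂.Indep A) (hB₁ : M₁.Indep B) (hB₂ : M₂.Indep B) :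
    ∃ S ⊆ B, M₁.Indep (A ∪ S) ∧ M₂.Indep (A ∪ S) ∧ B.card ≤ S.card + 2 * A.card := by
  obtain ⟨S₁, hS₁B, hS₁, hcard₁⟩ := M₁.exists_subset_indep_union_card_le hA₁ hB₁
  obtain ⟨S₂, hS₂B, hS₂, hcard₂⟩ := M₂.exists_subset_indep_union_card_le hA₂ hB₂
  refine ⟨S₁ ∩ S₂, inter_subset_left.trans hS₁B,
    M₁.indep_subset (union_subset_union_right inter_subset_left) hS₁,
    M₂.indep_subset (union_subset_union_right inter_subset_right) hS₂, ?_⟩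
  have := card_union_add_card_inter S₁ S₂
  have := card_le_card (union_subset hS₁B hS₂B)
  omega

theorem exists_subset_commonIndep_union_sum_le (M₁ M₂ : FinMatroid α) (w : α → ℝ)
    {A B : Finset α} {ρ : ℝ} (hρ : 0 ≤ ρ) (hBρ : ∀ e ∈ B, w e ≤ ρ)
    (hA₁ : M₁.Indep A) (hA₂ : M₂.Indep A) (hB₁ : M₁.Indep B) (hB₂ : M₂.Indep B) :
    ∃ S ⊆ B, M₁.Indep (A ∪ S) ∧ M₂.Indep (A ∪ S) ∧
      ∑ e ∈ B, w e ≤ ∑ e ∈ S, w e + 2 * A.card * ρ := by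
  obtain ⟨S, hSB, hS₁, hS₂, hcard⟩ :=
    exists_subset_commonIndep_union_card_le M₁ M₂ hA₁ hA₂ hB₁ hB₂
  refine ⟨S, hSB, hS₁, hS₂, ?_⟩
  have hlost : ∑ e ∈ B \ S, w e ≤ (B \ S).card * ρ := by
    simpa using sum_le_card_nsmul (B \ S) w ρ fun e he => hBρ e (mem_sdiff.1 he).1
  have hcard' : ((B \ S).card : ℝ) ≤ 2 * A.card := by
    have := card_sdiff_of_subset hSB
    exact_mod_cast (by omega : (B \ S).card ≤ 2 * A.card)
  rw [← sum_sdiff hSB]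
  nlinarith

theorem mul_sum_le_sum_of_classwise {M₁ M₂ : FinMatroid α} {w : α → ℝ} {a : ℝ} {k : ℕ}
    {P : ℕ → α → Prop} {I' : ℕ → Finset α} (hP : ∀ e, ∃ j < k, P j e)
    (hI' : ∀ j < k, ∀ T : Finset α, (∀ e ∈ T, P j e) → M₁.Indep T → M₂.Indep T →
      a * ∑ e ∈ T, w e ≤ ∑ e ∈ I' j, w e)
    {I : Finset α} (hI₁ : M₁.Indep I) (hI₂ : M₂.Indep I) :
    a * ∑ e ∈ I, w e ≤ ∑ j ∈ range k, ∑ e ∈ I' j, w e := by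
  choose cls hcls using hP
  rw [← sum_fiberwise_of_maps_to (g := cls) (t := range k) fun e _ => mem_range.2 (hcls e).1,
    mul_sum]
  refine sum_le_sum fun j hj => hI' j (mem_range.1 hj) _ (fun e he => ?_)
    (M₁.indep_subset (filter_subset _ _) hI₁) (M₂.indep_subset (filter_subset _ _) hI₂)
  obtain ⟨-, rfl⟩ := mem_filter.1 he
  exact (hcls e).2

end FinMatroid

/-- The weight classes `[l j, r j]`, `j < k`, of an `ε⁻¹`-spread instance. -/
structure IsSpread (ε : ℝ) (k : ℕ) (l r : ℕ → ℝ) : Prop where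
  pos_le : ∀ j < k, 0 < l j ∧ l j ≤ r j
  gap : ∀ j, j + 1 < k → r j / ε < l (j + 1)

namespace IsSpread

variable {ε : ℝ} {k : ℕ} {l r : ℕ → ℝ}

theorem sum_range_right_le (hs : IsSpread ε k l r) (hε0 : 0 < ε) (hε : ε ≤ 1 / 2) {c : ℕ}
    (hc : c < k) : ∑ j ∈ range c, r j ≤ 2 * ε * l c := by
  induction c with
  | zero =>
    rw [range_zero, sum_empty]
    nlinarith [(hs.pos_le 0 hc).1]
  | succ c ih =>
    have ih := ih (by omega)
    have ⟨hl, hlr⟩ := hs.pos_le c (by omega)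
    have hgap : r c < ε * l (c + 1) := by
      have := hs.gap c hc
      rwa [div_lt_iff₀ hε0, mul_comm] at this
    have hl' := (hs.pos_le (c + 1) hc).1
    rw [sum_range_succ]
    nlinarith

theorem right_lt_left (hs : IsSpread ε k l r) (hε0 : 0 < ε) (hε : ε < 1 / 2) {i j : ℕ}
    (hij : i < j) (hj : j < k) : r i < l j := by
  have hr : ∀ i' ∈ range j, 0 ≤ r i' := fun i' hi' =>
    have h := hs.pos_le i' ((mem_range.1 hi').trans hj)
    (h.1.trans_le h.2).le
  calc r i ≤ ∑ i' ∈ range j, r i' := single_le_sum hr (mem_range.2 hij)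
    _ ≤ 2 * ε * l j := hs.sum_range_right_le hε0 hε.le hj
    _ < l j := by nlinarith [(hs.pos_le j hj).1]

/-- The term `2 |I| (r_0 + ⋯ + r_{m-1})` reserves the charge that the elements of `I` pay
while the lighter classes are merged. -/
theorem exists_greedy_merge (hs : IsSpread ε k l r) (hε0 : 0 < ε) (hε : ε < 1 / 2)
    (M₁ M₂ : FinMatroid α) (w : α → ℝ) (I' : ℕ → Finset α)
    (hI'sub : ∀ j < k, ∀ e ∈ I' j, l j ≤ w e ∧ w e ≤ r j)
    (hI'ind : ∀ j < k, M₁.Indep (I' j) ∧ M₂.Indep (I' j)) {m : ℕ} (hm : m ≤ k) :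
    ∃ I ⊆ (Ico m k).biUnion I', M₁.Indep I ∧ M₂.Indep I ∧
      ∑ j ∈ Ico m k, ∑ e ∈ I' j, w e + 2 * I.card * ∑ j ∈ range m, r j ≤
        (1 + 4 * ε) * ∑ e ∈ I, w e := by
  induction hm using Nat.decreasingInduction with
  | self => exact ⟨∅, empty_subset _, M₁.indep_empty, M₂.indep_empty, by simp⟩
  | of_succ m hm ih =>
    obtain ⟨I, hIsub, hI₁, hI₂, hIw⟩ := ih
    have ⟨hl, hlr⟩ := hs.pos_le m hm
    obtain ⟨S, hSB, hS₁, hS₂, hSw⟩ := FinMatroid.exists_subset_commonIndep_union_sum_le M₁ M₂ w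
      (hl.trans_le hlr).le (fun e he => (hI'sub m hm e he).2) hI₁ hI₂ (hI'ind m hm).1
      (hI'ind m hm).2
    have hheavy : ∀ e ∈ I, r m < w e := fun e he => by
      obtain ⟨j, hj, hej⟩ := mem_biUnion.1 (hIsub he)
      obtain ⟨hmj, hjk⟩ := mem_Ico.1 hj
      exact (hs.right_lt_left hε0 hε hmj hjk).trans_le (hI'sub j hjk e hej).1
    have hdisj : Disjoint I S := disjoint_left.2 fun e heI heS =>
      (hheavy e heI).not_ge (hI'sub m hm e (hSB heS)).2
    have hSl : S.card * l m ≤ ∑ e ∈ S, w e := by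
      simpa using card_nsmul_le_sum S w (l m) fun e he => (hI'sub m hm e (hSB he)).1
    have hcharge : (S.card : ℝ) * ∑ j ∈ range m, r j ≤ S.card * (2 * ε * l m) :=
      mul_le_mul_of_nonneg_left (hs.sum_range_right_le hε0 hε.le hm) (Nat.cast_nonneg _)
    refine ⟨I ∪ S, union_subset (hIsub.trans (biUnion_subset_biUnion_of_subset_left _
      (Ico_subset_Ico_left m.le_succ))) (hSB.trans (subset_biUnion_of_mem I' (by simp [hm]))),
      hS₁, hS₂, ?_⟩
    rw [sum_eq_sum_Ico_succ_bot hm, sum_union hdisj, card_union_of_disjoint hdisj]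
    rw [sum_range_succ] at hIw
    push_cast
    nlinarith

end IsSpread

theorem one_sub_mul_le_of_le_one_add_mul {δ x y : ℝ} (hδ : 0 ≤ δ) (hx : 0 ≤ x)
    (h : x ≤ (1 + δ) * y) : (1 - δ) * x ≤ y :=
  le_of_mul_le_mul_left (by nlinarith [mul_nonneg (mul_nonneg hδ hδ) hx]) (by linarith : 0 < 1 + δ)

theorem spread_greedy_merge_approx_general (ε a : ℝ) (hε0 : 0 < ε) (hε : ε < 1/2)
    (ha0 : 0 ≤ a)
    (M'₁ M'₂ : FinMatroid α) (w : α → ℝ)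
    (k : ℕ) (l r : ℕ → ℝ)
    (hlr : ∀ j < k, 0 < l j ∧ l j ≤ r j)
    (hgap : ∀ j, j + 1 < k → r j / ε < l (j + 1))
    (hpart : ∀ e : α, ∃ j < k, l j ≤ w e ∧ w e ≤ r j)
    (I' : ℕ → Finset α)
    (hI'sub : ∀ j < k, ∀ e ∈ I' j, l j ≤ w e ∧ w e ≤ r j)
    (hI'ind : ∀ j < k, M'₁.Indep (I' j) ∧ M'₂.Indep (I' j))
    (hI'apx : ∀ j < k, ∀ T : Finset α, (∀ e ∈ T, l j ≤ w e ∧ w e ≤ r j) →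
      M'₁.Indep T → M'₂.Indep T → a * ∑ e ∈ T, w e ≤ ∑ e ∈ I' j, w e) :
    ∃ I ⊆ (Finset.range k).biUnion I', M'₁.Indep I ∧ M'₂.Indep I ∧
      ∀ Istar : Finset α, M'₁.Indep Istar → M'₂.Indep Istar →
        a * (1 - 4 * ε) * ∑ e ∈ Istar, w e ≤ ∑ e ∈ I, w e := by
  have hs : IsSpread ε k l r := ⟨hlr, hgap⟩
  obtain ⟨I, hIsub, hI₁, hI₂, hIw⟩ :=
    hs.exists_greedy_merge hε0 hε M'₁ M'₂ w I' hI'sub hI'ind (Nat.zero_le k)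
  rw [← range_eq_Ico] at hIsub hIw
  refine ⟨I, hIsub, hI₁, hI₂, fun Istar hIstar₁ hIstar₂ => ?_⟩
  have hw : ∀ e, 0 ≤ w e := fun e => by
    obtain ⟨j, hj, hle, -⟩ := hpart e
    exact ((hlr j hj).1.trans_le hle).le
  have happrox := FinMatroid.mul_sum_le_sum_of_classwise hpart hI'apx hIstar₁ hIstar₂
  rw [mul_comm a, mul_assoc]
  exact one_sub_mul_le_of_le_one_add_mul (by positivity)
    (mul_nonneg ha0 (sum_nonneg fun e _ => hw e)) (happrox.trans (by simpa using hIw))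

/-- merging `a`-approximate common independent sets of the weight
classes of an `ε⁻¹`-spread instance yields an `a(1 - 4ε)`-approximate common
independent set of the whole instance. -/
theorem spread_greedy_merge_approx (ε a : ℝ) (hε0 : 0 < ε) (hε : ε < 1/2)
    (ha0 : 0 ≤ a) (ha1 : a ≤ 1)
    (M'₁ M'₂ : FinMatroid α) (w : α → ℝ) (hw : ∀ e : α, 0 < w e)
    (k : ℕ) (l r : ℕ → ℝ)
    (hlr : ∀ j < k, 0 < l j ∧ l j ≤ r j)
    (hgap : ∀ j, j + 1 < k → r j / ε < l (j + 1))
    (hpart : ∀ e : α, ∃ j < k, l j ≤ w e ∧ w e ≤ r j)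
    (I' : ℕ → Finset α)
    (hI'sub : ∀ j < k, ∀ e ∈ I' j, l j ≤ w e ∧ w e ≤ r j)
    (hI'ind : ∀ j < k, M'₁.Indep (I' j) ∧ M'₂.Indep (I' j))
    (hI'apx : ∀ j < k, ∀ T : Finset α, (∀ e ∈ T, l j ≤ w e ∧ w e ≤ r j) →
      M'₁.Indep T → M'₂.Indep T → a * ∑ e ∈ T, w e ≤ ∑ e ∈ I' j, w e) :
    ∃ I ⊆ (Finset.range k).biUnion I', M'₁.Indep I ∧ M'₂.Indep I ∧
      ∀ Istar : Finset α, M'₁.Indep Istar → M'₂.Indep Istar →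
        a * (1 - 4 * ε) * ∑ e ∈ Istar, w e ≤ ∑ e ∈ I, w e :=
  spread_greedy_merge_approx_general ε a hε0 hε ha0 M'₁ M'₂ w k l r hlr hgap hpart I' hI'sub hI'ind
    hI'apx
end

section
/- Let 0 < ε ≤ 1/2 and α ∈ [0,1]. Let M'₁, M'₂ be matroids on a common finite nonempty ground set N' with weight function w : N' → ℝ, w(e) > 0 for all e, and let W_min = min_{e∈N'} w(e). For each e ∈ N' define w_s(e) = 2w(e)/(ε·W_min), let i_e be the unique integer with (1+ε)^{i_e} ≤ w_s(e) < (1+ε)^{i_e+1}, and define the rounded weight w_r(e) = ⌊(1+ε)^{i_e}⌋. If S is a common independent set of M'₁, M'₂ with ∑_{e∈S} w_r(e) ≥ α · max{∑_{e∈T} w_r(e) : T a common independent set of M'₁, M'₂}, then ∑_{e∈S} w(e) ≥ (1 − 2ε) · α · max{∑_{e∈T} w(e) : T a common independent set of M'₁, M'₂}. -/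
/-!
After scaling, every weight satisfies `w_s ≥ 2/ε`. Rounding down to a power of `1 + ε` loses
at most a factor `1 + ε`, and the integer floor at most `1 ≤ (ε/2)·w_s`, so
`(1 - 2ε)·w_s ≤ w_r ≤ w_s`. Such two-sided bounds transfer an `a`-approximation for `w_r`
into a `(1 - 2ε)·a`-approximation for `w_s`, and hence for `w`, a positive multiple of `w_s`.
-/

open Finset

variable {α : Type*} [DecidableEq α] [Fintype α]

theorem Int.floor_zpow_mem_Ioc {b x : ℝ} (hb : 1 < b) {i : ℤ}
    (hlo : b ^ i ≤ x) (hhi : x < b ^ (i + 1)) :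
    (⌊b ^ i⌋ : ℝ) ∈ Set.Ioc (x / b - 1) x := by
  have hb0 : 0 < b := by linarith
  have hdiv : x / b < b ^ i := by
    rwa [div_lt_iff₀ hb0, ← zpow_add_one₀ hb0.ne']
  exact ⟨by linarith [Int.sub_one_lt_floor (b ^ i)], (Int.floor_le _).trans hlo⟩

theorem one_sub_two_mul_mul_le_div_sub_one {ε x : ℝ} (hε : 0 < ε) (hx : 2 / ε ≤ x) :
    (1 - 2 * ε) * x ≤ x / (1 + ε) - 1 := by
  have hx0 : 0 ≤ x := (by positivity : (0 : ℝ) ≤ 2 / ε).trans hx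
  have hone : 1 ≤ ε / 2 * x := by
    rw [div_le_iff₀ hε] at hx
    linarith
  have hinv : (1 - ε) * x ≤ x / (1 + ε) := by
    rw [le_div_iff₀ (by linarith)]
    nlinarith [sq_nonneg ε]
  nlinarith

theorem mul_mul_sum_le_sum_of_le_of_le {ι : Type*} {u v : ι → ℝ} {a c : ℝ} (ha : 0 ≤ a)
    (hlow : ∀ e, c * u e ≤ v e) (hup : ∀ e, v e ≤ u e) {S T : Finset ι}
    (happrox : a * ∑ e ∈ T, v e ≤ ∑ e ∈ S, v e) :
    c * a * ∑ e ∈ T, u e ≤ ∑ e ∈ S, u e :=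
  calc c * a * ∑ e ∈ T, u e = a * ∑ e ∈ T, c * u e := by rw [← mul_sum]; ring
    _ ≤ a * ∑ e ∈ T, v e := mul_le_mul_of_nonneg_left (sum_le_sum fun e _ => hlow e) ha
    _ ≤ ∑ e ∈ S, v e := happrox
    _ ≤ ∑ e ∈ S, u e := sum_le_sum fun e _ => hup e

theorem rounding_preserves_approx_general (ε a : ℝ) (hε0 : 0 < ε)
    (ha0 : 0 ≤ a)
    (M'₁ M'₂ : FinMatroid α)
    (w : α → ℝ) (hw : ∀ e : α, 0 < w e)
    (Wmin : ℝ) (hWmin_le : ∀ e : α, Wmin ≤ w e) (hWmin_mem : ∃ e : α, w e = Wmin)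
    (idx : α → ℤ)
    (hidx : ∀ e : α, (1 + ε) ^ (idx e) ≤ 2 * w e / (ε * Wmin) ∧
      2 * w e / (ε * Wmin) < (1 + ε) ^ (idx e + 1))
    (S : Finset α)
    (hSapx : ∀ T : Finset α, M'₁.Indep T → M'₂.Indep T →
      a * ∑ e ∈ T, (⌊(1 + ε) ^ (idx e)⌋ : ℝ) ≤ ∑ e ∈ S, (⌊(1 + ε) ^ (idx e)⌋ : ℝ)) :
    ∀ T : Finset α, M'₁.Indep T → M'₂.Indep T →
      (1 - 2 * ε) * a * ∑ e ∈ T, w e ≤ ∑ e ∈ S, w e := by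
  intro T hT1 hT2
  obtain ⟨e₀, rfl⟩ := hWmin_mem
  simp_rw [mul_div_right_comm (2 : ℝ)] at hidx
  set k := 2 / (ε * w e₀)
  have hk : 0 < k := by have := hw e₀; positivity
  have hscaled e : 2 / ε ≤ k * w e :=
    calc 2 / ε = k * w e₀ := by simp only [k]; field_simp [(hw e₀).ne']
      _ ≤ k * w e := mul_le_mul_of_nonneg_left (hWmin_le e) hk.le
  have hround e := Int.floor_zpow_mem_Ioc (by linarith) (hidx e).1 (hidx e).2
  have happrox := mul_mul_sum_le_sum_of_le_of_le ha0
    (fun e => (one_sub_two_mul_mul_le_div_sub_one hε0 (hscaled e)).trans (hround e).1.le)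
    (fun e => (hround e).2) (hSapx T hT1 hT2)
  rw [← mul_sum, ← mul_sum, mul_left_comm] at happrox
  exact le_of_mul_le_mul_left happrox hk

/-- an `a`-approximate common independent set with respect to the
rounded weights `w_r e = ⌊(1+ε)^{i_e}⌋` is a `(1-2ε)·a`-approximate common
independent set with respect to the original weights. -/
theorem rounding_preserves_approx (ε a : ℝ) (hε0 : 0 < ε) (hε : ε ≤ 1/2)
    (ha0 : 0 ≤ a) (ha1 : a ≤ 1) [Nonempty α]
    (M'₁ M'₂ : FinMatroid α)
    (w : α → ℝ) (hw : ∀ e : α, 0 < w e)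
    (Wmin : ℝ) (hWmin_le : ∀ e : α, Wmin ≤ w e) (hWmin_mem : ∃ e : α, w e = Wmin)
    (idx : α → ℤ)
    (hidx : ∀ e : α, (1 + ε) ^ (idx e) ≤ 2 * w e / (ε * Wmin) ∧
      2 * w e / (ε * Wmin) < (1 + ε) ^ (idx e + 1))
    (S : Finset α) (hS1 : M'₁.Indep S) (hS2 : M'₂.Indep S)
    (hSapx : ∀ T : Finset α, M'₁.Indep T → M'₂.Indep T →
      a * ∑ e ∈ T, (⌊(1 + ε) ^ (idx e)⌋ : ℝ) ≤ ∑ e ∈ S, (⌊(1 + ε) ^ (idx e)⌋ : ℝ)) :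
    ∀ T : Finset α, M'₁.Indep T → M'₂.Indep T →
      (1 - 2 * ε) * a * ∑ e ∈ T, w e ≤ ∑ e ∈ S, w e :=
  rounding_preserves_approx_general ε a hε0 ha0 M'₁ M'₂ w hw Wmin hWmin_le hWmin_mem idx hidx S
    hSapx
end

section
/- Let 0 < ε < 1/2. Let M be a matroid on a finite ground set N with weight function w : N → ℝ, w(e) > 0 for all e, and let E be a collection of pairwise disjoint two-element subsets of N, each independent in M; the weight of a pair P ∈ E is w(P) = ∑_{e∈P} w(e). Suppose there are pairwise disjoint intervals [l_1,r_1], …, [l_k,r_k] with 0 < l_j ≤ r_j and l_{j+1} > r_j/ε, such that every pair in E has its weight in exactly one interval, and let E_j = {P ∈ E : l_j ≤ w(P) ≤ r_j}. For each j ∈ {1,…,k} let I_j ⊆ E_j be a collection of pairs such that ⋃_{P∈I_j} P is independent in M. Then there exists a collection I ⊆ ⋃_{j=1}^k I_j such that ⋃_{P∈I} P is independent in M and ∑_{P∈I} w(P) ≥ (1 − 4ε) · ∑_{j=1}^{k} ∑_{P∈I_j} w(P). -/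
/-!
Treat the weight classes from the heaviest to the lightest, keeping everything chosen so far.
If `B` is the independent set built from the heavier classes, matroid augmentation adds all
but at most `#B` pairs of the next class (the pairs are disjoint). Hence a kept pair of class
`j` blocks at most two pairs of each lighter class `i`, each of weight at most `r i`, and the
spread condition gives `∑ i < j, r i ≤ 2 ε l j`: the total loss is at most `4 ε` times the
weight kept.
-/

open Finset

variable {α : Type*} [DecidableEq α] [Fintype α]

theorem Finset.card_sdiff_le_of_subset_union_of_card_le {β : Type*} [DecidableEq β]
    {A B B' : Finset β} (hB' : B' ⊆ A ∪ B) (hcard : #A ≤ #B') : #(A \ B') ≤ #B := by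
  have hA := card_sdiff_add_card_inter A B'
  have hB'split := card_sdiff_add_card_inter B' A
  have hsub : B' \ A ⊆ B := fun x hx => by
    rw [mem_sdiff] at hx
    exact (mem_union.1 (hB' hx.1)).resolve_left hx.2
  have := card_le_card hsub
  rw [inter_comm] at hB'split
  omega

theorem Finset.card_filter_not_subset_le {β : Type*} [DecidableEq β] {S : Finset (Finset β)}
    (hS : (S : Set (Finset β)).PairwiseDisjoint id) (X : Finset β) :
    #(S.filter fun P => ¬P ⊆ X) ≤ #(S.biUnion id \ X) := by
  set D := S.filter fun P => ¬P ⊆ X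
  calc #D ≤ #(D.biUnion fun P => P \ X) :=
        card_le_card_biUnion
          (fun P hP Q hQ hPQ => (hS (filter_subset _ _ hP) (filter_subset _ _ hQ) hPQ).mono
            sdiff_le sdiff_le)
          (fun P hP => sdiff_nonempty.2 (mem_filter.1 hP).2)
    _ ≤ #(S.biUnion id \ X) :=
        card_le_card <| biUnion_subset.2 fun P hP =>
          sdiff_subset_sdiff (subset_biUnion_of_mem id (filter_subset _ _ hP)) subset_rfl

theorem Finset.card_biUnion_biUnion_le {ι β : Type*} [DecidableEq β] {s : Finset ι}
    {J : ι → Finset (Finset β)} {n : ℕ} (hJ : ∀ i ∈ s, ∀ P ∈ J i, #P ≤ n) :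
    #(s.biUnion fun i => (J i).biUnion id) ≤ ∑ i ∈ s, n * #(J i) :=
  card_biUnion_le.trans <| sum_le_sum fun i hi =>
    (card_biUnion_le_card_mul _ _ n (hJ i hi)).trans_eq (mul_comm _ _)

theorem sum_range_le_two_mul_of_spread {ε : ℝ} (hε0 : 0 < ε) (hε : ε ≤ 1 / 2) {k : ℕ}
    {l r : ℕ → ℝ} (hlr : ∀ j < k, 0 < l j ∧ l j ≤ r j)
    (hgap : ∀ j, j + 1 < k → r j / ε < l (j + 1)) (j : ℕ) (hj : j < k) :
    ∑ i ∈ range j, r i ≤ 2 * ε * l j := by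
  induction j with
  | zero => simpa using mul_nonneg (by positivity : (0 : ℝ) ≤ 2 * ε) (hlr 0 hj).1.le
  | succ j ih =>
    have hrj : r j < ε * l (j + 1) := by
      have := hgap j hj
      rwa [div_lt_iff₀ hε0, mul_comm] at this
    obtain ⟨hl, hlr⟩ := hlr j (by omega)
    rw [sum_range_succ]
    nlinarith [ih (by omega)]

theorem right_lt_left_of_spread {ε : ℝ} (hε0 : 0 < ε) (hε : ε < 1 / 2) {k : ℕ} {l r : ℕ → ℝ}
    (hlr : ∀ j < k, 0 < l j ∧ l j ≤ r j) (hgap : ∀ j, j + 1 < k → r j / ε < l (j + 1))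
    {i j : ℕ} (hij : i < j) (hj : j < k) : r i < l j := by
  have hr : ∀ i ∈ range j, 0 ≤ r i := fun i hi =>
    have := hlr i ((mem_range.1 hi).trans hj); this.1.le.trans this.2
  calc r i ≤ ∑ i ∈ range j, r i := single_le_sum hr (mem_range.2 hij)
    _ ≤ 2 * ε * l j := sum_range_le_two_mul_of_spread hε0 hε.le hlr hgap j hj
    _ < l j := by nlinarith [(hlr j hj).1]

theorem pairwiseDisjoint_range_of_forall_mem_Icc {γ : Type*} {k : ℕ} {l r : ℕ → ℝ}
    (hlr : ∀ i j, i < j → j < k → r i < l j) (f : γ → ℝ) {J : ℕ → Finset γ}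
    (hJ : ∀ j < k, ∀ x ∈ J j, f x ∈ Set.Icc (l j) (r j)) :
    (range k : Set ℕ).PairwiseDisjoint J := by
  have key : ∀ {i j}, i < j → j < k → Disjoint (J i) (J j) := fun hij hj =>
    disjoint_left.2 fun x hxi hxj =>
      ((hJ _ (hij.trans hj) x hxi).2.trans_lt (hlr _ _ hij hj)).not_ge (hJ _ hj x hxj).1
  intro i hi j hj hij
  simp only [coe_range, Set.mem_Iio] at hi hj
  rcases hij.lt_or_gt with h | h
  · exact key h hj
  · exact (key h hi).symm

namespace FinMatroid

variable (M : FinMatroid α)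

theorem exists_indep_superset_card_le {A B : Finset α} (hA : M.Indep A) (hB : M.Indep B) :
    ∃ B', B ⊆ B' ∧ B' ⊆ A ∪ B ∧ M.Indep B' ∧ #A ≤ #B' := by
  induction hn : #A - #B generalizing B with
  | zero => exact ⟨B, subset_rfl, subset_union_right, hB, by omega⟩
  | succ n ih =>
    obtain ⟨x, hx, hxB⟩ := M.indep_exchange hA hB (by omega)
    rw [mem_sdiff] at hx
    obtain ⟨B', hxBB', hB'A, hB', hcard⟩ := ih hxB (by rw [card_insert_of_notMem hx.2]; omega)
    refine ⟨B', (subset_insert _ _).trans hxBB', hB'A.trans ?_, hB', hcard⟩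
    exact union_subset subset_union_left (insert_subset (mem_union_left _ hx.1) subset_union_right)

theorem exists_subset_indep_union_card_sdiff_le {S : Finset (Finset α)} {B : Finset α}
    (hS : (S : Set (Finset α)).PairwiseDisjoint id) (hSind : M.Indep (S.biUnion id))
    (hB : M.Indep B) : ∃ T ⊆ S, M.Indep (B ∪ T.biUnion id) ∧ #(S \ T) ≤ #B := by
  obtain ⟨B', hBB', hB'A, hB', hcard⟩ := M.exists_indep_superset_card_le hSind hB
  refine ⟨S.filter (· ⊆ B'), filter_subset _ _, M.indep_subset ?_ hB', ?_⟩
  · refine union_subset hBB' (biUnion_subset.2 fun P hP => (mem_filter.1 hP).2)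
  · rw [← filter_not]
    exact (card_filter_not_subset_le hS B').trans
      (card_sdiff_le_of_subset_union_of_card_le hB'A hcard)

theorem exists_greedy_merge (w : α → ℝ) (k : ℕ) (r : ℕ → ℝ) (I : ℕ → Finset (Finset α))
    (hr : ∀ j < k, 0 ≤ r j)
    (hI : ∀ j < k, ∀ P ∈ I j, #P ≤ 2 ∧ ∑ e ∈ P, w e ≤ r j)
    (hdisj : ∀ j < k, (I j : Set (Finset α)).PairwiseDisjoint id)
    (hind : ∀ j < k, M.Indep ((I j).biUnion id)) :
    ∃ J : ℕ → Finset (Finset α), (∀ j, J j ⊆ I j) ∧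
      M.Indep ((range k).biUnion fun j => (J j).biUnion id) ∧
      ∑ j ∈ range k, ∑ P ∈ I j, ∑ e ∈ P, w e ≤
        ∑ j ∈ range k, (∑ P ∈ J j, ∑ e ∈ P, w e + 2 * #(J j) * ∑ i ∈ range j, r i) := by
  induction k generalizing r I with
  | zero => exact ⟨fun _ => ∅, fun _ => empty_subset _, by simpa using M.indep_empty, by simp⟩
  | succ k ih =>
    obtain ⟨J, hJI, hJind, hJw⟩ := ih (fun j => r (j + 1)) (fun j => I (j + 1))
      (fun j hj => hr _ (by omega)) (fun j hj => hI _ (by omega))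
      (fun j hj => hdisj _ (by omega)) (fun j hj => hind _ (by omega))
    set B := (range k).biUnion fun j => (J j).biUnion id
    obtain ⟨T, hTI, hTind, hTcard⟩ :=
      M.exists_subset_indep_union_card_sdiff_le (hdisj 0 (by omega)) (hind 0 (by omega)) hJind
    let J' : ℕ → Finset (Finset α) := fun | 0 => T | j + 1 => J j
    refine ⟨J', fun | 0 => hTI | j + 1 => hJI j, M.indep_subset ?_ hTind, ?_⟩
    · intro x hx
      simp only [mem_biUnion, mem_range, id] at hx
      obtain ⟨j, hj, P, hP, hxP⟩ := hx
      cases j with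
      | zero => exact mem_union_right _ (mem_biUnion.2 ⟨P, hP, hxP⟩)
      | succ j =>
        exact mem_union_left _
          (mem_biUnion.2 ⟨j, mem_range.2 (by omega), mem_biUnion.2 ⟨P, hP, hxP⟩⟩)
    · have hBcard : #B ≤ ∑ j ∈ range k, 2 * #(J j) :=
        card_biUnion_biUnion_le fun j hj P hP =>
          (hI (j + 1) (by have := mem_range.1 hj; omega) P (hJI j hP)).1
      have hloss : ∑ P ∈ I 0, ∑ e ∈ P, w e ≤ ∑ P ∈ T, ∑ e ∈ P, w e + #B * r 0 := by
        have hsdiff : ∑ P ∈ I 0 \ T, ∑ e ∈ P, w e ≤ #(I 0 \ T) * r 0 := by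
          simpa using sum_le_card_nsmul _ _ _ fun P hP => (hI 0 (by omega) P (mem_sdiff.1 hP).1).2
        have hcard : (#(I 0 \ T) : ℝ) * r 0 ≤ #B * r 0 :=
          mul_le_mul_of_nonneg_right (by exact_mod_cast hTcard) (hr 0 (by omega))
        linarith [sum_sdiff hTI (f := fun P => ∑ e ∈ P, w e)]
      have hBr : (#B : ℝ) * r 0 ≤ ∑ j ∈ range k, 2 * #(J j) * r 0 := by
        rw [← sum_mul]
        exact mul_le_mul_of_nonneg_right (by exact_mod_cast hBcard) (hr 0 (by omega))
      simp only [J', sum_range_succ', mul_add, sum_add_distrib, range_zero, sum_empty] at hJw ⊢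
      linarith

end FinMatroid

theorem parity_spread_merge_general (ε : ℝ) (hε0 : 0 < ε) (hε : ε < 1/2)
    (M : FinMatroid α) (w : α → ℝ) (hw : ∀ e : α, 0 < w e)
    (E : Finset (Finset α))
    (hpair : ∀ P ∈ E, P.card = 2 ∧ M.Indep P)
    (hdisj : ∀ P ∈ E, ∀ Q ∈ E, P ≠ Q → Disjoint P Q)
    (k : ℕ) (l r : ℕ → ℝ)
    (hlr : ∀ j < k, 0 < l j ∧ l j ≤ r j)
    (hgap : ∀ j, j + 1 < k → r j / ε < l (j + 1))
    (I' : ℕ → Finset (Finset α))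
    (hI'sub : ∀ j < k, ∀ P ∈ I' j, P ∈ E ∧ l j ≤ ∑ e ∈ P, w e ∧ ∑ e ∈ P, w e ≤ r j)
    (hI'ind : ∀ j < k, M.Indep ((I' j).biUnion id)) :
    ∃ I ⊆ (Finset.range k).biUnion I', M.Indep (I.biUnion id) ∧
      (1 - 4 * ε) * ∑ j ∈ Finset.range k, ∑ P ∈ I' j, ∑ e ∈ P, w e ≤
        ∑ P ∈ I, ∑ e ∈ P, w e := by
  obtain ⟨J, hJI, hJind, hJw⟩ := M.exists_greedy_merge w k r I'
    (fun j hj => (hlr j hj).1.le.trans (hlr j hj).2)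
    (fun j hj P hP => ⟨(hpair P (hI'sub j hj P hP).1).1.le, (hI'sub j hj P hP).2.2⟩)
    (fun j hj P hP Q hQ => hdisj P (hI'sub j hj P hP).1 Q (hI'sub j hj Q hQ).1)
    hI'ind
  have hJclass : ∀ j < k, ∀ P ∈ J j, ∑ e ∈ P, w e ∈ Set.Icc (l j) (r j) :=
    fun j hj P hP => (hI'sub j hj P (hJI j hP)).2
  refine ⟨(range k).biUnion J, biUnion_mono fun j _ => hJI j, by rwa [biUnion_biUnion], ?_⟩
  rw [sum_biUnion <| pairwiseDisjoint_range_of_forall_mem_Icc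
    (fun _ _ => right_lt_left_of_spread hε0 hε hlr hgap) _ hJclass]
  have hloss : ∀ j ∈ range k,
      2 * #(J j) * ∑ i ∈ range j, r i ≤ 4 * ε * ∑ P ∈ J j, ∑ e ∈ P, w e := by
    intro j hj
    rw [mem_range] at hj
    have hl : #(J j) * l j ≤ ∑ P ∈ J j, ∑ e ∈ P, w e := by
      simpa using card_nsmul_le_sum _ _ _ fun P hP => (hJclass j hj P hP).1
    nlinarith [mul_le_mul_of_nonneg_left (sum_range_le_two_mul_of_spread hε0 hε.le hlr hgap j hj)
      (by positivity : (0 : ℝ) ≤ 2 * #(J j))]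
  have hJI' : ∑ j ∈ range k, ∑ P ∈ J j, ∑ e ∈ P, w e ≤
      ∑ j ∈ range k, ∑ P ∈ I' j, ∑ e ∈ P, w e :=
    sum_le_sum fun j _ => sum_le_sum_of_subset_of_nonneg (hJI j) fun P _ _ =>
      sum_nonneg fun e _ => (hw e).le
  rw [sum_add_distrib] at hJw
  have := sum_le_sum hloss
  rw [← mul_sum] at this
  linarith [mul_le_mul_of_nonneg_left hJI' (by positivity : (0 : ℝ) ≤ 4 * ε)]

/-- the greedy merge guarantee for weighted matroid parity: given
feasible parity solutions in each weight class of an `ε⁻¹`-spread instance,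
there is a feasible parity solution inside their union of weight at least
`(1 - 4ε)` times the total weight. -/
theorem parity_spread_merge (ε : ℝ) (hε0 : 0 < ε) (hε : ε < 1/2)
    (M : FinMatroid α) (w : α → ℝ) (hw : ∀ e : α, 0 < w e)
    (E : Finset (Finset α))
    (hpair : ∀ P ∈ E, P.card = 2 ∧ M.Indep P)
    (hdisj : ∀ P ∈ E, ∀ Q ∈ E, P ≠ Q → Disjoint P Q)
    (k : ℕ) (l r : ℕ → ℝ)
    (hlr : ∀ j < k, 0 < l j ∧ l j ≤ r j)
    (hgap : ∀ j, j + 1 < k → r j / ε < l (j + 1))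
    (hclass : ∀ P ∈ E, ∃ j < k, l j ≤ ∑ e ∈ P, w e ∧ ∑ e ∈ P, w e ≤ r j)
    (I' : ℕ → Finset (Finset α))
    (hI'sub : ∀ j < k, ∀ P ∈ I' j, P ∈ E ∧ l j ≤ ∑ e ∈ P, w e ∧ ∑ e ∈ P, w e ≤ r j)
    (hI'ind : ∀ j < k, M.Indep ((I' j).biUnion id)) :
    ∃ I ⊆ (Finset.range k).biUnion I', M.Indep (I.biUnion id) ∧
      (1 - 4 * ε) * ∑ j ∈ Finset.range k, ∑ P ∈ I' j, ∑ e ∈ P, w e ≤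
        ∑ P ∈ I, ∑ e ∈ P, w e :=
  parity_spread_merge_general ε hε0 hε M w hw E hpair hdisj k l r hlr hgap I' hI'sub hI'ind
end
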